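/- Let R be a commutative ring, q ∈ R, A an associative unital R-algebra, and a, b ∈ A satisfying the q-commutation relation a*b - q•(b*a) = 1. Then for every natural number n, the normal-ordering expansion holds: (b*a)^n = \sum_{k=0}^{n} S_q(n,k) • (b^k * a^k). -/

import Mathlib

/-- The q-integer [n]_q. -/
def qInt {R : Type*} [CommRing R] (q : R) (n : ℕ) : R :=
  ∑ i ∈ Finset.range n, q ^ i

/-- The q-Stirling numbers of the second kind. -/
def qStirling {R : Type*} [CommRing R] (q : R) : ℕ → ℕ → R
  | 0, 0 => 1
  | 0, _ + 1 => 0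
  | _ + 1, 0 => 0
  | n + 1, k + 1 => q ^ k * qStirling q n k + qInt q (k + 1) * qStirling q n (k + 1)

/-!
Multiplying `b ^ k * a ^ k` on the left by `b * a` and pushing the `a` through `b ^ k` with the
q-commutation relation gives `q ^ k • b ^ (k + 1) * a ^ (k + 1) + [k]_q • b ^ k * a ^ k`.
Hence left multiplication by `b * a` acts on the normally ordered monomials exactly as the
recurrence of `qStirling` does, and the expansion follows by induction on `n`.
-/

section qStirling

variable {R : Type*} [CommRing R] (q : R)

@[simp]
lemma qInt_zero : qInt q 0 = 0 := by
  simp [qInt]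

lemma qInt_succ (k : ℕ) : qInt q (k + 1) = qInt q k + q ^ k :=
  Finset.sum_range_succ _ _

lemma qStirling_eq_zero_of_lt : ∀ {n k : ℕ}, n < k → qStirling q n k = 0
  | 0, _ + 1, _ => rfl
  | n + 1, k + 1, hk => by
    have hnk : n < k := Nat.succ_lt_succ_iff.mp hk
    rw [qStirling, qStirling_eq_zero_of_lt hnk, qStirling_eq_zero_of_lt (hnk.trans k.lt_succ_self),
      mul_zero, mul_zero, add_zero]

lemma sum_qStirling_succ_smul {M : Type*} [AddCommGroup M] [Module R M] (n : ℕ) (f : ℕ → M) :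
    ∑ k ∈ Finset.range (n + 2), qStirling q (n + 1) k • f k =
      ∑ k ∈ Finset.range (n + 1), qStirling q n k • (q ^ k • f (k + 1) + qInt q k • f k) := by
  have hshift : ∑ k ∈ Finset.range (n + 1), (qInt q (k + 1) * qStirling q n (k + 1)) • f (k + 1) =
      ∑ k ∈ Finset.range (n + 1), (qInt q k * qStirling q n k) • f k := by
    set g : ℕ → M := fun k => (qInt q k * qStirling q n k) • f k
    calc ∑ k ∈ Finset.range (n + 1), g (k + 1) = ∑ k ∈ Finset.range (n + 2), g k := by
          simp [Finset.sum_range_succ' g (n + 1), g]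
      _ = ∑ k ∈ Finset.range (n + 1), g k := by
          simp [Finset.sum_range_succ g (n + 1), g, qStirling_eq_zero_of_lt q n.lt_succ_self]
  rw [Finset.sum_range_succ', qStirling, zero_smul, add_zero]
  simp only [qStirling, add_smul, Finset.sum_add_distrib, hshift, smul_add, smul_smul, mul_comm]

end qStirling

section qBoson

variable {R : Type*} [CommRing R] {q : R} {A : Type*} [Ring A] [Algebra R A] {a b : A}

lemma mul_pow_succ_of_qcomm (h : a * b - q • (b * a) = 1) (k : ℕ) :
    a * b ^ (k + 1) = q ^ (k + 1) • (b ^ (k + 1) * a) + qInt q (k + 1) • b ^ k := by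
  have hab : a * b = 1 + q • (b * a) := by rw [← h]; abel
  induction k with
  | zero => simp [qInt, hab, add_comm]
  | succ k ih =>
    rw [pow_succ b (k + 1), ← mul_assoc, ih, add_mul, smul_mul_assoc, smul_mul_assoc, mul_assoc,
      hab, qInt_succ q (k + 1)]
    simp only [mul_add, mul_one, mul_smul_comm, ← mul_assoc, ← pow_succ]
    module

lemma mul_mul_pow_mul_pow_of_qcomm (h : a * b - q • (b * a) = 1) (k : ℕ) :
    b * a * (b ^ k * a ^ k) = q ^ k • (b ^ (k + 1) * a ^ (k + 1)) + qInt q k • (b ^ k * a ^ k) := by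
  cases k with
  | zero => simp
  | succ k =>
    calc b * a * (b ^ (k + 1) * a ^ (k + 1)) = b * (a * b ^ (k + 1)) * a ^ (k + 1) := by
          noncomm_ring
      _ = _ := by
          rw [mul_pow_succ_of_qcomm h k]
          simp only [mul_add, add_mul, mul_smul_comm, smul_mul_assoc, ← mul_assoc, ← pow_succ',
            mul_assoc _ a]

end qBoson

/-- Normal-ordering expansion of (b a)^n via q-Stirling numbers. -/
theorem qBoson_normal_order {R : Type*} [CommRing R] (q : R) {A : Type*} [Ring A]
    [Algebra R A] (a b : A) (h : a * b - q • (b * a) = 1) (n : ℕ) :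
    (b * a) ^ n = ∑ k ∈ Finset.range (n + 1), qStirling q n k • (b ^ k * a ^ k) := by
  induction n with
  | zero => simp [qStirling]
  | succ n ih =>
    rw [pow_succ', ih, Finset.mul_sum, sum_qStirling_succ_smul]
    refine Finset.sum_congr rfl fun k _ => ?_
    rw [mul_smul_comm, mul_mul_pow_mul_pow_of_qcomm h]
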